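/- Let K ∈ ℝ^{4×4} be the matrix with block form [[0, I₂],[I₂, 0]]. For a, b ∈ ℝ let X(a,b) = a(E_{1,1} + E_{2,2} − E_{3,3} − E_{4,4}) + b(E_{1,2} − E_{2,1} + E_{3,4} − E_{4,3}) ∈ ℝ^{4×4}. Then M = {E(X(a,b), 0) : a, b ∈ ℝ} is a maximal abelian subalgebra of the Lie algebra e(K). -/

import Mathlib

open Matrix

/-- `o(K)`: real matrices `X` with `XK + KXᵀ = 0`. -/
def oK {n : ℕ} (K : Matrix (Fin n) (Fin n) ℝ) : Set (Matrix (Fin n) (Fin n) ℝ) :=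
  {X | X * K + K * Xᵀ = 0}

/-- The `(n+1) × (n+1)` matrix `E(X, a)` with block form `[[X, a], [0, 0]]`. -/
def Emat {n : ℕ} (X : Matrix (Fin n) (Fin n) ℝ) (a : Fin n → ℝ) :
    Matrix (Fin (n + 1)) (Fin (n + 1)) ℝ :=
  Matrix.of fun i j =>
    if hi : i.val < n then
      if hj : j.val < n then X ⟨i.val, hi⟩ ⟨j.val, hj⟩ else a ⟨i.val, hi⟩
    else 0

/-- The Lie algebra `e(K)`, as a set of `(n+1) × (n+1)` matrices. -/
def eK {n : ℕ} (K : Matrix (Fin n) (Fin n) ℝ) :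
    Set (Matrix (Fin (n + 1)) (Fin (n + 1)) ℝ) :=
  {m | ∃ X ∈ oK K, ∃ a : Fin n → ℝ, m = Emat X a}

/-- `M` is a maximal abelian subalgebra of the matrix Lie algebra (set) `L`:
it is a linear subspace contained in `L`, its elements pairwise commute, and
every element of `L` commuting with all of `M` belongs to `M`. -/
def IsMASA {κ : Type*} [Fintype κ] (L M : Set (Matrix κ κ ℝ)) : Prop :=
  M ⊆ L ∧
  (∀ X ∈ M, ∀ Y ∈ M, X * Y = Y * X) ∧
  (0 : Matrix κ κ ℝ) ∈ M ∧
  (∀ X ∈ M, ∀ Y ∈ M, X + Y ∈ M) ∧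
  (∀ (c : ℝ), ∀ X ∈ M, c • X ∈ M) ∧
  (∀ Y ∈ L, (∀ X ∈ M, Y * X = X * Y) → Y ∈ M)

/-!
Commuting with `E(X(1,0), 0)` forces the translation part `α` of `E(X, α)` to vanish, because
`X(1,0) = diag(1,1,-1,-1)` is invertible, and forces `X` to be block diagonal. Commuting with
`E(X(0,1), 0)` then makes both diagonal blocks commute with the rotation `[[0,1],[-1,0]]`, so each
is of the form `[[p,q],[-q,p]]`, and `X ∈ o(K)` ties the lower block to minus the transpose of the
upper one: `X = X(X₀₀, X₀₁)`.
-/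

lemma Matrix.ext_castSucc_last {α : Type*} {n : ℕ} {A B : Matrix (Fin (n + 1)) (Fin (n + 1)) α}
    (h : ∀ i j : Fin n, A i.castSucc j.castSucc = B i.castSucc j.castSucc)
    (hcol : ∀ i : Fin n, A i.castSucc (Fin.last n) = B i.castSucc (Fin.last n))
    (hrow : ∀ j, A (Fin.last n) j = B (Fin.last n) j) : A = B := by
  ext i j
  induction i using Fin.lastCases with
  | last => exact hrow j
  | cast i =>
    induction j using Fin.lastCases with
    | last => exact hcol i
    | cast j => exact h i j

section Emat

variable {n : ℕ}

@[simp]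
lemma Emat_castSucc_castSucc (X : Matrix (Fin n) (Fin n) ℝ) (a : Fin n → ℝ) (i j : Fin n) :
    Emat X a i.castSucc j.castSucc = X i j := by
  simp [Emat]

@[simp]
lemma Emat_castSucc_last (X : Matrix (Fin n) (Fin n) ℝ) (a : Fin n → ℝ) (i : Fin n) :
    Emat X a i.castSucc (Fin.last n) = a i := by
  simp [Emat]

@[simp]
lemma Emat_last (X : Matrix (Fin n) (Fin n) ℝ) (a : Fin n → ℝ) (j : Fin (n + 1)) :
    Emat X a (Fin.last n) j = 0 := by
  simp [Emat]

lemma Emat_inj {X X' : Matrix (Fin n) (Fin n) ℝ} {a a' : Fin n → ℝ} :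
    Emat X a = Emat X' a' ↔ X = X' ∧ a = a' := by
  refine ⟨fun h => ⟨?_, ?_⟩, fun ⟨hX, ha⟩ => hX ▸ ha ▸ rfl⟩
  · ext i j
    simpa using congr_fun₂ h i.castSucc j.castSucc
  · ext i
    simpa using congr_fun₂ h i.castSucc (Fin.last n)

lemma Emat_mul (X X' : Matrix (Fin n) (Fin n) ℝ) (a a' : Fin n → ℝ) :
    Emat X a * Emat X' a' = Emat (X * X') (X *ᵥ a') := by
  apply Matrix.ext_castSucc_last <;>
    simp [mul_apply, Fin.sum_univ_castSucc, mulVec, dotProduct]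

lemma Emat_add (X X' : Matrix (Fin n) (Fin n) ℝ) (a a' : Fin n → ℝ) :
    Emat X a + Emat X' a' = Emat (X + X') (a + a') := by
  apply Matrix.ext_castSucc_last <;> simp

lemma Emat_smul (c : ℝ) (X : Matrix (Fin n) (Fin n) ℝ) (a : Fin n → ℝ) :
    c • Emat X a = Emat (c • X) (c • a) := by
  apply Matrix.ext_castSucc_last <;> simp

lemma Emat_zero : Emat (0 : Matrix (Fin n) (Fin n) ℝ) 0 = 0 := by
  apply Matrix.ext_castSucc_last <;> simp

end Emat

def Kmat : Matrix (Fin 4) (Fin 4) ℝ :=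
  !![0, 0, 1, 0; 0, 0, 0, 1; 1, 0, 0, 0; 0, 1, 0, 0]

def Xab (a b : ℝ) : Matrix (Fin 4) (Fin 4) ℝ :=
  !![a, b, 0, 0; -b, a, 0, 0; 0, 0, -a, b; 0, 0, -b, -a]

lemma Xab_mem_oK (a b : ℝ) : Xab a b ∈ oK Kmat := by
  ext i j
  fin_cases i <;> fin_cases j <;>
    simp [Xab, Kmat, vecMul, dotProduct, Fin.sum_univ_four, vecHead, vecTail]

lemma Xab_commute (a b a' b' : ℝ) : Commute (Xab a b) (Xab a' b') := by
  ext i j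
  fin_cases i <;> fin_cases j <;> simp [Xab, mul_apply, Fin.sum_univ_four] <;> ring

lemma Xab_add (a b a' b' : ℝ) : Xab a b + Xab a' b' = Xab (a + a') (b + b') := by
  ext i j
  fin_cases i <;> fin_cases j <;> simp [Xab] <;> ring

lemma Xab_smul (c a b : ℝ) : c • Xab a b = Xab (c * a) (c * b) := by
  ext i j
  fin_cases i <;> fin_cases j <;> simp [Xab]

lemma Xab_zero : Xab 0 0 = 0 := by
  ext i j
  fin_cases i <;> fin_cases j <;> simp [Xab]

lemma Xab_one_zero_mul_self : Xab 1 0 * Xab 1 0 = 1 := by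
  ext i j
  fin_cases i <;> fin_cases j <;> simp [Xab, mul_apply, Fin.sum_univ_four]

lemma eq_zero_of_Xab_one_zero_mulVec_eq_zero {v : Fin 4 → ℝ} (h : Xab 1 0 *ᵥ v = 0) : v = 0 := by
  rw [← one_mulVec v, ← Xab_one_zero_mul_self, ← mulVec_mulVec, h, mulVec_zero]

lemma eq_Xab_of_mem_oK_of_commute {X : Matrix (Fin 4) (Fin 4) ℝ} (hX : X ∈ oK Kmat)
    (h₁ : Commute X (Xab 1 0)) (h₂ : Commute X (Xab 0 1)) : X = Xab (X 0 0) (X 0 1) := by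
  have e₁ := h₁.eq
  have e₂ := h₂.eq
  have e₀ : X * Kmat + Kmat * Xᵀ = 0 := hX
  rw [← Matrix.ext_iff] at e₀ e₁ e₂
  simp [Fin.forall_fin_succ, Xab, Kmat, mul_apply, Fin.sum_univ_four, vecMul, dotProduct] at e₀ e₁ e₂
  ext i j
  fin_cases i <;> fin_cases j <;> simp [Xab] <;> linarith

lemma Emat_eq_Emat_Xab_of_commute {X : Matrix (Fin 4) (Fin 4) ℝ} {α : Fin 4 → ℝ}
    (hX : X ∈ oK Kmat) (h₁ : Commute (Emat X α) (Emat (Xab 1 0) 0))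
    (h₂ : Commute (Emat X α) (Emat (Xab 0 1) 0)) :
    Emat X α = Emat (Xab (X 0 0) (X 0 1)) 0 := by
  rw [Commute, SemiconjBy, Emat_mul, Emat_mul, mulVec_zero, Emat_inj] at h₁ h₂
  rw [eq_zero_of_Xab_one_zero_mulVec_eq_zero h₁.2.symm]
  exact congr_arg (Emat · 0) (eq_Xab_of_mem_oK_of_commute hX h₁.1 h₂.1)

/-- `M = {E(X(a,b), 0)}` with `X(a,b) = a(E₁₁+E₂₂-E₃₃-E₄₄) + b(E₁₂-E₂₁+E₃₄-E₄₃)`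
is a maximal abelian subalgebra of `e(K)`, `K = [[0, I₂],[I₂, 0]]`. -/
theorem stmt16 :
    IsMASA (eK (!![0, 0, 1, 0; 0, 0, 0, 1; 1, 0, 0, 0; 0, 1, 0, 0] :
        Matrix (Fin 4) (Fin 4) ℝ))
      {m | ∃ a b : ℝ,
        m = Emat (!![a, b, 0, 0;
                     -b, a, 0, 0;
                     0, 0, -a, b;
                     0, 0, -b, -a] : Matrix (Fin 4) (Fin 4) ℝ) 0} := by
  show IsMASA (eK Kmat) {m | ∃ a b : ℝ, m = Emat (Xab a b) 0}
  refine ⟨?_, ?_, ⟨0, 0, by rw [Xab_zero, Emat_zero]⟩, ?_, ?_, ?_⟩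
  · rintro m ⟨a, b, rfl⟩
    exact ⟨Xab a b, Xab_mem_oK a b, 0, rfl⟩
  · rintro x ⟨a, b, rfl⟩ y ⟨a', b', rfl⟩
    rw [Emat_mul, Emat_mul, mulVec_zero, mulVec_zero, (Xab_commute a b a' b').eq]
  · rintro x ⟨a, b, rfl⟩ y ⟨a', b', rfl⟩
    exact ⟨a + a', b + b', by rw [Emat_add, Xab_add, add_zero]⟩
  · rintro c x ⟨a, b, rfl⟩
    exact ⟨c * a, c * b, by rw [Emat_smul, Xab_smul, smul_zero]⟩
  · rintro Y ⟨X, hX, α, rfl⟩ hY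
    exact ⟨X 0 0, X 0 1, Emat_eq_Emat_Xab_of_commute hX (hY _ ⟨1, 0, rfl⟩) (hY _ ⟨0, 1, rfl⟩)⟩
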